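/- arXiv:1505.04521 — 2 statements merged into one kernel-verified Lean document; each statement's English description precedes it below -/
import Mathlib

section
/- Suppose m : ℝ × ℝⁿ → ℝ is C¹ with nonvanishing partial derivative in the first variable, and suppose there exist functions f₁, …, fₙ (each differentiable and nonvanishing on the range of m) such that ∂m/∂yᵢ(x, y) = fᵢ(m(x, y)) for all (x, y) and all i. Then there exist constants c_{ij} ≠ 0 with fᵢ = c_{ij}·fⱼ on the range of m, for all i, j. -/
/-!
Let `G` be a primitive of `1 / f j` on the range of `m`, an open interval. Each line
`t ↦ m (x, y + t eⱼ)` solves `z' = f j z`, so `G ∘ m` grows along it at unit speed: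
`G (m (x, y + t eⱼ)) = G (m (x, y)) + t`. Differentiating this identity in `yᵢ` needs only
first derivatives of `m`, and shows that `f i / f j` is constant along these lines. By the chain
rule along such a line, `(f i / f j)' * f j = 0` on the range of `m`, so `f i / f j` is constant
on this connected open set.
-/

/-- Partial derivative of `m : ℝ × (Fin n → ℝ) → ℝ` in the first (`x`) variable. -/
noncomputable def pdx {n : ℕ} (m : ℝ × (Fin n → ℝ) → ℝ) (x : ℝ) (y : Fin n → ℝ) : ℝ :=
  deriv (fun t => m (t, y)) x

/-- Partial derivative of `m : ℝ × (Fin n → ℝ) → ℝ` in the `i`-th `y` variable. -/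
noncomputable def pdy {n : ℕ} (i : Fin n) (m : ℝ × (Fin n → ℝ) → ℝ)
    (x : ℝ) (y : Fin n → ℝ) : ℝ :=
  deriv (fun t => m (x, Function.update y i t)) (y i)

open Function Set

theorem IsOpen.exists_hasDerivAt_of_continuousOn {E : Type*} [NormedAddCommGroup E]
    [NormedSpace ℝ E] [CompleteSpace E] {V : Set ℝ} {g : ℝ → E} (hV : IsOpen V)
    (hVc : IsPreconnected V) (hg : ContinuousOn g V) :
    ∃ G : ℝ → E, ∀ z ∈ V, HasDerivAt G (g z) z := by
  rcases V.eq_empty_or_nonempty with rfl | ⟨z₀, hz₀⟩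
  · exact ⟨0, by simp⟩
  refine ⟨fun z => ∫ t in z₀..z, g t, fun z hz => ?_⟩
  have hsub : uIcc z₀ z ⊆ V := hVc.ordConnected.uIcc_subset hz₀ hz
  exact intervalIntegral.integral_hasDerivAt_right (hg.mono hsub).intervalIntegrable
    (hg.stronglyMeasurableAtFilter hV z hz) ((hg z hz).continuousAt (hV.mem_nhds hz))

theorem primitive_inv_comp_solution_eq {φ g G : ℝ → ℝ}
    (hφ : ∀ t, HasDerivAt φ (g (φ t)) t) (hG : ∀ t, HasDerivAt G (g (φ t))⁻¹ (φ t))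
    (hg : ∀ t, g (φ t) ≠ 0) (t t₀ : ℝ) :
    G (φ t) = G (φ t₀) + (t - t₀) := by
  have hderiv : ∀ u, HasDerivAt (fun t => G (φ t) - t) 0 u := fun u => by
    have : HasDerivAt (fun t => G (φ t) - t) ((g (φ u))⁻¹ * g (φ u) - 1) u :=
      ((hG u).comp u (hφ u)).sub (hasDerivAt_id' u)
    rwa [inv_mul_cancel₀ (hg u), sub_self] at this
  have : G (φ t) - t = G (φ t₀) - t₀ := is_const_of_deriv_eq_zero
    (fun u => (hderiv u).differentiableAt) (fun u => (hderiv u).deriv) t t₀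
  linarith

theorem div_comp_eq_of_partials {φ : ℝ → ℝ → ℝ} {g h G : ℝ → ℝ}
    (hs : ∀ s t, HasDerivAt (φ · t) (g (φ s t)) s)
    (ht : ∀ s t, HasDerivAt (φ s) (h (φ s t)) t)
    (hG : ∀ s t, HasDerivAt G (h (φ s t))⁻¹ (φ s t))
    (hh : ∀ s t, h (φ s t) ≠ 0) (s t t₀ : ℝ) :
    g (φ s t) / h (φ s t) = g (φ s t₀) / h (φ s t₀) := by
  have hshift : (fun s => G (φ s t)) = fun s => G (φ s t₀) + (t - t₀) :=
    funext fun s => primitive_inv_comp_solution_eq (ht s) (hG s) (hh s) t t₀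
  have hderiv : ∀ u, HasDerivAt (fun s => G (φ s u)) ((h (φ s u))⁻¹ * g (φ s u)) s :=
    fun u => (hG s u).comp s (hs s u)
  have ht' := hderiv t
  rw [hshift] at ht'
  have := ht'.unique ((hderiv t₀).add_const (t - t₀))
  rwa [inv_mul_eq_div, inv_mul_eq_div] at this

theorem deriv_eq_zero_of_comp_eq_const {r φ : ℝ → ℝ} {a c t₀ : ℝ}
    (hφ : HasDerivAt φ a t₀) (ha : a ≠ 0) (hr : DifferentiableAt ℝ r (φ t₀))
    (hc : ∀ t, r (φ t) = c) : deriv r (φ t₀) = 0 := by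
  have hconst : HasDerivAt (r ∘ φ) 0 t₀ := by
    rw [show r ∘ φ = fun _ => c from funext hc]
    exact hasDerivAt_const _ _
  exact (mul_eq_zero.mp ((hr.hasDerivAt.comp t₀ hφ).unique hconst)).resolve_right ha

section Slices

variable {n : ℕ} {m : ℝ × (Fin n → ℝ) → ℝ}

theorem hasDerivAt_slice_of_pdy_eq {g : ℝ → ℝ} {i : Fin n} (hm : Differentiable ℝ m)
    (heq : ∀ x y, pdy i m x y = g (m (x, y))) (x : ℝ) (y : Fin n → ℝ) (s : ℝ) :
    HasDerivAt (fun t => m (x, update y i t)) (g (m (x, update y i s))) s := by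
  have hd : DifferentiableAt ℝ (fun t => m (x, update y i t)) s :=
    ((hm _).hasFDerivAt.comp_hasDerivAt s
      ((hasDerivAt_const s x).prodMk (hasDerivAt_update y i s))).differentiableAt
  have hpdy := heq x (update y i s)
  simp only [pdy, update_self, update_idem] at hpdy
  exact hpdy ▸ hd.hasDerivAt

theorem div_comp_update_eq {f : Fin n → ℝ → ℝ} {G : ℝ → ℝ} {i j : Fin n} (hij : i ≠ j)
    (hm : Differentiable ℝ m) (heq : ∀ k x y, pdy k m x y = f k (m (x, y)))
    (hG : ∀ z ∈ range m, HasDerivAt G (f j z)⁻¹ z) (hf0 : ∀ z ∈ range m, f j z ≠ 0)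
    (x : ℝ) (y : Fin n → ℝ) (t : ℝ) :
    f i (m (x, update y j t)) / f j (m (x, update y j t)) =
      f i (m (x, y)) / f j (m (x, y)) := by
  have := div_comp_eq_of_partials (φ := fun s t => m (x, update (update y i s) j t))
    (fun s t => by
      simpa only [update_comm hij] using hasDerivAt_slice_of_pdy_eq hm (heq i) x (update y j t) s)
    (fun s t => hasDerivAt_slice_of_pdy_eq hm (heq j) x (update y i s) t)
    (fun _ _ => hG _ (mem_range_self _)) (fun _ _ => hf0 _ (mem_range_self _)) (y i) t (y j)
  simpa only [update_eq_self] using this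

end Slices

theorem f_i_proportional_general {n : ℕ} (m : ℝ × (Fin n → ℝ) → ℝ) (f : Fin n → ℝ → ℝ)
    (U : Set ℝ) (hrange : Set.range m ⊆ U)
    (hm : ContDiff ℝ 1 m)
    (hf : ∀ (i : Fin n), ∀ z ∈ U, DifferentiableAt ℝ (f i) z)
    (hf0 : ∀ (i : Fin n), ∀ z ∈ U, f i z ≠ 0)
    (heq : ∀ (i : Fin n) x y, pdy i m x y = f i (m (x, y)))
    (hro : IsOpen (Set.range m)) (hrc : IsConnected (Set.range m)) :
    ∀ i j : Fin n, ∃ c : ℝ, c ≠ 0 ∧ ∀ z ∈ Set.range m, f i z = c * f j z := by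
  intro i j
  rcases eq_or_ne i j with rfl | hij
  · exact ⟨1, one_ne_zero, fun z _ => (one_mul _).symm⟩
  have hdm : Differentiable ℝ m := hm.differentiable one_ne_zero
  have hfV : ∀ k, ∀ z ∈ range m, DifferentiableAt ℝ (f k) z := fun k z hz => hf k z (hrange hz)
  have hf0V : ∀ k, ∀ z ∈ range m, f k z ≠ 0 := fun k z hz => hf0 k z (hrange hz)
  obtain ⟨G, hG⟩ := hro.exists_hasDerivAt_of_continuousOn hrc.isPreconnected
    (g := fun z => (f j z)⁻¹) fun z hz =>
      ((hfV j z hz).continuousAt.inv₀ (hf0V j z hz)).continuousWithinAt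
  have hr : ∀ z ∈ range m, DifferentiableAt ℝ (fun z => f i z / f j z) z := fun z hz =>
    (hfV i z hz).div (hfV j z hz) (hf0V j z hz)
  have hr' : EqOn (deriv fun z => f i z / f j z) 0 (range m) := by
    rintro _ ⟨⟨x, y⟩, rfl⟩
    have := deriv_eq_zero_of_comp_eq_const (hasDerivAt_slice_of_pdy_eq hdm (heq j) x y (y j))
      (hf0V j _ (mem_range_self _)) (hr _ (mem_range_self _))
      (div_comp_update_eq hij hdm heq hG (hf0V j) x y)
    simpa only [update_eq_self, Pi.zero_apply] using this
  obtain ⟨z₀, hz₀⟩ := hrc.nonempty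
  refine ⟨f i z₀ / f j z₀, div_ne_zero (hf0V i z₀ hz₀) (hf0V j z₀ hz₀), fun z hz => ?_⟩
  rw [← hro.is_const_of_deriv_eq_zero hrc.isPreconnected
    (fun z hz => (hr z hz).differentiableWithinAt) hr' hz hz₀]
  exact (div_mul_cancel₀ _ (hf0V j z hz)).symm

/-- If `m` is C¹ with nonvanishing `∂m/∂x` and `∂m/∂yᵢ = fᵢ ∘ m` for differentiable
nonvanishing functions `fᵢ` on an open set containing the (open connected) range of `m`,
then `fᵢ = c·fⱼ` on the range of `m` for some nonzero constant `c = c_{ij}`. -/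
theorem f_i_proportional {n : ℕ} (m : ℝ × (Fin n → ℝ) → ℝ) (f : Fin n → ℝ → ℝ)
    (U : Set ℝ) (hU : IsOpen U) (hrange : Set.range m ⊆ U)
    (hm : ContDiff ℝ 1 m)
    (hmx : ∀ x y, pdx m x y ≠ 0)
    (hf : ∀ (i : Fin n), ∀ z ∈ U, DifferentiableAt ℝ (f i) z)
    (hf0 : ∀ (i : Fin n), ∀ z ∈ U, f i z ≠ 0)
    (heq : ∀ (i : Fin n) x y, pdy i m x y = f i (m (x, y)))
    (hro : IsOpen (Set.range m)) (hrc : IsConnected (Set.range m)) :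
    ∀ i j : Fin n, ∃ c : ℝ, c ≠ 0 ∧ ∀ z ∈ Set.range m, f i z = c * f j z :=
  f_i_proportional_general m f U hrange hm hf hf0 heq hro hrc
end

section
/- If a smooth function g : ℝⁿ → ℝ does not depend on its last variable structurally in the sense that ∂ⁿ⁻¹g/∂y₁⋯∂y_{n-1} = 0 identically (n ≥ 2), then g can be written as a finite sum of smooth functions each depending on at most n-2 of the variables y₁, …, y_{n-1} (plus possibly the remaining variables). -/
/-- Partial derivative of `f : (Fin m → ℝ) → ℝ` in the `i`-th coordinate. -/
noncomputable def pd {m : ℕ} (i : Fin m) (f : (Fin m → ℝ) → ℝ) (y : Fin m → ℝ) : ℝ :=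
  deriv (fun t => f (Function.update y i t)) (y i)

/-- Iterated mixed partial derivative along a list of coordinates. -/
noncomputable def mpd {m : ℕ} (l : List (Fin m)) (f : (Fin m → ℝ) → ℝ) :
    (Fin m → ℝ) → ℝ :=
  l.foldr (fun i g => pd i g) f

lemma hasDerivAt_update_pt {m : ℕ} (y : Fin m → ℝ) (i : Fin m) (s : ℝ) :
    HasDerivAt (fun t : ℝ => Function.update y i t) (Pi.single i 1) s := by
  have heq : (fun t : ℝ => Function.update y i t)
      = fun t => y + (t - y i) • (Pi.single i 1 : Fin m → ℝ) := by
    funext t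
    funext j
    by_cases h : j = i
    · subst h; simp
    · simp [Function.update_of_ne h, Pi.single_eq_of_ne h]
  rw [heq]
  simpa using (((hasDerivAt_id s).sub_const (y i)).smul_const (Pi.single i (1:ℝ))).const_add y

lemma hasDerivAt_pd {m : ℕ} {f : (Fin m → ℝ) → ℝ} (hf : Differentiable ℝ f)
    (i : Fin m) (y : Fin m → ℝ) (s : ℝ) :
    HasDerivAt (fun t => f (Function.update y i t))
      (fderiv ℝ f (Function.update y i s) (Pi.single i 1)) s :=
  ((hf _).hasFDerivAt).comp_hasDerivAt s (hasDerivAt_update_pt y i s)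

lemma pd_eq {m : ℕ} {f : (Fin m → ℝ) → ℝ} (hf : Differentiable ℝ f)
    (i : Fin m) (y : Fin m → ℝ) :
    pd i f y = fderiv ℝ f y (Pi.single i 1) := by
  have h := (hasDerivAt_pd hf i y (y i)).deriv
  rw [pd, h, Function.update_eq_self]

lemma pd_contDiff {m : ℕ} {f : (Fin m → ℝ) → ℝ} (hf : ContDiff ℝ (⊤ : ℕ∞) f) (i : Fin m) :
    ContDiff ℝ (⊤ : ℕ∞) (pd i f) := by
  have : pd i f = fun y => fderiv ℝ f y (Pi.single i 1) :=
    funext (pd_eq (hf.differentiable (by simp)) i)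
  rw [this]
  exact (hf.fderiv_right (by simp)).clm_apply contDiff_const

lemma mpd_contDiff {m : ℕ} (l : List (Fin m)) {f : (Fin m → ℝ) → ℝ}
    (hf : ContDiff ℝ (⊤ : ℕ∞) f) : ContDiff ℝ (⊤ : ℕ∞) (mpd l f) := by
  induction l with
  | nil => exact hf
  | cons i l ih => exact pd_contDiff ih i

lemma pd_sub {m : ℕ} {f f' : (Fin m → ℝ) → ℝ} (hf : ContDiff ℝ (⊤ : ℕ∞) f)
    (hf' : ContDiff ℝ (⊤ : ℕ∞) f') (i : Fin m) (y : Fin m → ℝ) :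
    pd i (fun y => f y - f' y) y = pd i f y - pd i f' y := by
  have h1 := hasDerivAt_pd (hf.differentiable (by simp)) i y (y i)
  have h2 := hasDerivAt_pd (hf'.differentiable (by simp)) i y (y i)
  have h3 : deriv (fun t => f (Function.update y i t) - f' (Function.update y i t)) (y i) = _ :=
    (h1.sub h2).deriv
  show deriv (fun t => f (Function.update y i t) - f' (Function.update y i t)) (y i)
      = pd i f y - pd i f' y
  rw [h3, pd_eq (hf.differentiable (by simp)), pd_eq (hf'.differentiable (by simp)), Function.update_eq_self]

lemma mpd_sub {m : ℕ} {f f' : (Fin m → ℝ) → ℝ} (hf : ContDiff ℝ (⊤ : ℕ∞) f)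
    (hf' : ContDiff ℝ (⊤ : ℕ∞) f') (l : List (Fin m)) (y : Fin m → ℝ) :
    mpd l (fun y => f y - f' y) y = mpd l f y - mpd l f' y := by
  induction l generalizing y with
  | nil => rfl
  | cons i l ih =>
    have heq : mpd l (fun y => f y - f' y) = fun y => mpd l f y - mpd l f' y :=
      funext fun y => ih y
    show pd i (mpd l (fun y => f y - f' y)) y = pd i (mpd l f) y - pd i (mpd l f') y
    rw [heq]
    exact pd_sub (mpd_contDiff l hf) (mpd_contDiff l hf') i y

lemma indep {m : ℕ} {f : (Fin m → ℝ) → ℝ} (hf : ContDiff ℝ (⊤ : ℕ∞) f) {i : Fin m}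
    (h0 : ∀ y, pd i f y = 0) (y : Fin m → ℝ) (t : ℝ) :
    f (Function.update y i t) = f y := by
  set φ := fun s => f (Function.update y i s) with hφ
  have hd : ∀ s, HasDerivAt φ 0 s := by
    intro s
    have h := hasDerivAt_pd (hf.differentiable (by simp)) i y s
    have : fderiv ℝ f (Function.update y i s) (Pi.single i 1) = 0 := by
      rw [← pd_eq (hf.differentiable (by simp))]; exact h0 _
    rwa [this] at h
  have hconst : ∀ a b : ℝ, φ a = φ b :=
    is_const_of_deriv_eq_zero (fun s => (hd s).differentiableAt)
      (fun s => (hd s).deriv)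
  have := hconst t (y i)
  simpa [hφ, Function.update_eq_self] using this

lemma pd_update_zero_comm {m : ℕ} (f : (Fin m → ℝ) → ℝ) {i j : Fin m} (hji : j ≠ i)
    (y : Fin m → ℝ) :
    pd j (fun y => f (Function.update y i 0)) y = pd j f (Function.update y i 0) := by
  show deriv (fun t => f (Function.update (Function.update y j t) i 0)) (y j)
      = deriv (fun t => f (Function.update (Function.update y i 0) j t))
          ((Function.update y i 0) j)
  have h1 : ∀ t : ℝ, Function.update (Function.update y j t) i 0
      = Function.update (Function.update y i 0) j t := fun t =>
    Function.update_comm hji t 0 y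
  simp only [h1, Function.update_of_ne hji]

lemma mpd_update_zero_comm {m : ℕ} {f : (Fin m → ℝ) → ℝ} {i : Fin m}
    {l : List (Fin m)} (hil : i ∉ l) (y : Fin m → ℝ) :
    mpd l (fun y => f (Function.update y i 0)) y
      = mpd l f (Function.update y i 0) := by
  induction l generalizing y with
  | nil => rfl
  | cons j l ih =>
    have hji : j ≠ i := fun h => hil (h ▸ (List.mem_cons_self : j ∈ j :: l))
    have hil' : i ∉ l := fun h => hil (List.mem_cons_of_mem j h)
    have heq : mpd l (fun y => f (Function.update y i 0))
        = fun y => mpd l f (Function.update y i 0) := funext fun y => ih hil' y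
    show pd j (mpd l (fun y => f (Function.update y i 0))) y = _
    rw [heq]
    exact pd_update_zero_comm (mpd l f) hji y

lemma update_zero_contDiff {m : ℕ} (i : Fin m) :
    ContDiff ℝ (⊤ : ℕ∞) (fun y : Fin m → ℝ => Function.update y i 0) := by
  have heq : (fun y : Fin m → ℝ => Function.update y i 0)
      = fun y => y - (y i) • (Pi.single i 1 : Fin m → ℝ) := by
    funext y
    funext j
    by_cases h : j = i
    · subst h; simp
    · simp [Function.update_of_ne h, Pi.single_eq_of_ne h]
  rw [heq]
  exact contDiff_id.sub ((contDiff_apply ℝ ℝ i).smul contDiff_const)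

lemma key {m : ℕ} (l : List (Fin m)) (hnd : l.Nodup) :
    ∀ (g : (Fin m → ℝ) → ℝ), ContDiff ℝ (⊤ : ℕ∞) g → (∀ y, mpd l g y = 0) →
    ∃ (k : ℕ) (F : Fin k → (Fin m → ℝ) → ℝ),
      (∀ j, ContDiff ℝ (⊤ : ℕ∞) (F j)) ∧
      (∀ j, ∃ i : Fin m, ∀ (y : Fin m → ℝ) (t : ℝ),
        F j (Function.update y i t) = F j y) ∧
      (∀ y, g y = ∑ j, F j y) := by
  induction l with
  | nil =>
    intro g hg h0
    exact ⟨0, ![], by simp, by simp, fun y => by simpa [mpd] using h0 y⟩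
  | cons i l ih =>
    intro g hg h0
    obtain ⟨hil, hl⟩ : i ∉ l ∧ l.Nodup := by simpa using hnd
    set B := fun y => g (Function.update y i 0) with hB
    have hBsm : ContDiff ℝ (⊤ : ℕ∞) B := hg.comp (update_zero_contDiff i)
    have hAsm : ContDiff ℝ (⊤ : ℕ∞) (fun y => g y - B y) := hg.sub hBsm
    have hind : ∀ (y : Fin m → ℝ) (t : ℝ),
        mpd l g (Function.update y i t) = mpd l g y :=
      indep (mpd_contDiff l hg) (fun y => h0 y)
    have hA0 : ∀ y, mpd l (fun y => g y - B y) y = 0 := by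
      intro y
      rw [mpd_sub hg hBsm l y, hB]
      rw [mpd_update_zero_comm hil y, hind y 0, sub_self]
    obtain ⟨k, F, hF1, hF2, hF3⟩ := ih hl (fun y => g y - B y) hAsm hA0
    refine ⟨k + 1, Fin.cons B F, ?_, ?_, ?_⟩
    · intro j
      refine Fin.cases ?_ ?_ j
      · exact hBsm
      · exact hF1
    · intro j
      refine Fin.cases ?_ ?_ j
      · exact ⟨i, fun y t => by simp [hB, Function.update_idem]⟩
      · exact hF2
    · intro y
      rw [Fin.sum_univ_succ]
      simp only [Fin.cons_zero, Fin.cons_succ]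
      have := hF3 y
      linarith

/-- If `g : ℝ^(n-1) → ℝ` is smooth with `∂ⁿ⁻¹g/∂y₁⋯∂y_{n-1} = 0` identically (`n ≥ 2`),
then `g` is a finite sum of smooth functions each of which is independent of at least one
of the variables (hence each depends on at most `n-2` of the variables). -/
theorem vanishing_full_mixed_partial_sum_decomp {n : ℕ} (hn : 2 ≤ n)
    (g : (Fin (n - 1) → ℝ) → ℝ) (hg : ContDiff ℝ (⊤ : ℕ∞) g)
    (hmp : ∀ y, mpd (List.ofFn (id : Fin (n - 1) → Fin (n - 1))) g y = 0) :
    ∃ (m : ℕ) (F : Fin m → (Fin (n - 1) → ℝ) → ℝ),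
      (∀ j, ContDiff ℝ (⊤ : ℕ∞) (F j)) ∧
      (∀ j, ∃ i : Fin (n - 1), ∀ (y : Fin (n - 1) → ℝ) (t : ℝ),
        F j (Function.update y i t) = F j y) ∧
      (∀ y, g y = ∑ j, F j y) := by
  exact key _ (List.nodup_ofFn.mpr Function.injective_id) g hg hmp
end
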